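/- Let Δ be a p × q real matrix, S ⊂ {1,…,p} with |S| = s, and suppose ‖Δ_{S^c}‖_{2,1} ≤ 3‖Δ_S‖_{2,1}. Let S' ⊂ S^c be the set of indices of the s rows of Δ in S^c with largest Euclidean norms. Then Σ_{k ∈ (S∪S')^c} ‖Δ_k‖² ≤ 9 Σ_{k ∈ S∪S'} ‖Δ_k‖², and consequently ‖Δ‖_F² ≤ 10‖Δ_{S∪S'}‖_F². -/
import Mathlib


open Real Finset

/-- Under the cone condition, the rows outside `S ∪ S'` (where `S'` collects
the `s` largest rows outside `S`) carry at most 9 times the squared mass of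
the rows in `S ∪ S'`, whence `‖Δ‖_F² ≤ 10 ‖Δ_{S∪S'}‖_F²`. -/
theorem cone_condition_row_mass_bound
    (p q s : ℕ) (hp : 2 * s ≤ p) (Δ : Matrix (Fin p) (Fin q) ℝ)
    (S : Finset (Fin p)) (hS : S.card = s)
    (hcone : ∑ k ∈ Sᶜ, Real.sqrt (∑ j, Δ k j ^ 2) ≤
      3 * ∑ k ∈ S, Real.sqrt (∑ j, Δ k j ^ 2))
    (S' : Finset (Fin p)) (hS'sub : S' ⊆ Sᶜ) (hS'card : S'.card = s)
    (hmax : ∀ k ∈ S', ∀ k' ∈ Sᶜ \ S',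
      Real.sqrt (∑ j, Δ k' j ^ 2) ≤ Real.sqrt (∑ j, Δ k j ^ 2)) :
    (∑ k ∈ (S ∪ S')ᶜ, ∑ j, Δ k j ^ 2 ≤ 9 * ∑ k ∈ S ∪ S', ∑ j, Δ k j ^ 2) ∧
      ∑ k, ∑ j, Δ k j ^ 2 ≤ 10 * ∑ k ∈ S ∪ S', ∑ j, Δ k j ^ 2 := by
  set f : Fin p → ℝ := fun k => Real.sqrt (∑ j, Δ k j ^ 2) with hf
  have hf0 : ∀ k, 0 ≤ f k := fun k => Real.sqrt_nonneg _
  have hfsq : ∀ k, f k ^ 2 = ∑ j, Δ k j ^ 2 := fun k =>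
    Real.sq_sqrt (Finset.sum_nonneg fun j _ => sq_nonneg _)
  have hTc : (S ∪ S')ᶜ = Sᶜ \ S' := by
    ext k; simp [Finset.mem_compl, Finset.mem_sdiff, and_comm, not_or]
  have key : ∑ k ∈ (S ∪ S')ᶜ, f k ^ 2 ≤ 9 * ∑ k ∈ S ∪ S', f k ^ 2 := by
    rcases Nat.eq_zero_or_pos s with hs | hs
    · -- s = 0 : all f vanish
      have hSempty : S = ∅ := Finset.card_eq_zero.mp (hS.trans hs)
      have hzero : ∀ k, f k = 0 := by
        intro k
        have h1 : ∑ k ∈ Sᶜ, f k ≤ 0 := by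
          simpa [hSempty] using hcone
        have h2 : ∀ k ∈ Sᶜ, f k = 0 :=
          (Finset.sum_eq_zero_iff_of_nonneg fun k _ => hf0 k).mp
            (le_antisymm h1 (Finset.sum_nonneg fun k _ => hf0 k))
        exact h2 k (by simp [hSempty])
      simp [hzero]
    · have hspos : (0:ℝ) < s := by exact_mod_cast hs
      -- rows outside S ∪ S' are dominated by average of S'
      have hA : ∀ k ∈ Sᶜ \ S', f k ≤ (∑ k' ∈ S', f k') / s := by
        intro k hk
        rw [le_div_iff₀ hspos]
        calc f k * s = ∑ _k' ∈ S', f k := by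
              rw [Finset.sum_const, hS'card, nsmul_eq_mul, mul_comm]
          _ ≤ ∑ k' ∈ S', f k' := Finset.sum_le_sum fun k' hk' => hmax k' hk' k hk
      have hS'le : ∑ k ∈ S', f k ≤ ∑ k ∈ Sᶜ, f k :=
        Finset.sum_le_sum_of_subset_of_nonneg hS'sub fun k _ _ => hf0 k
      have hsdle : ∑ k ∈ Sᶜ \ S', f k ≤ ∑ k ∈ Sᶜ, f k :=
        Finset.sum_le_sum_of_subset_of_nonneg (Finset.sdiff_subset) fun k _ _ => hf0 k
      have hScnn : 0 ≤ ∑ k ∈ Sᶜ, f k := Finset.sum_nonneg fun k _ => hf0 k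
      have step1 : ∑ k ∈ Sᶜ \ S', f k ^ 2 ≤ (∑ k ∈ Sᶜ, f k) ^ 2 / s := by
        calc ∑ k ∈ Sᶜ \ S', f k ^ 2
            ≤ ∑ k ∈ Sᶜ \ S', ((∑ k' ∈ S', f k') / s) * f k := by
              refine Finset.sum_le_sum fun k hk => ?_
              rw [sq]
              exact mul_le_mul_of_nonneg_right (hA k hk) (hf0 k)
          _ = ((∑ k' ∈ S', f k') / s) * ∑ k ∈ Sᶜ \ S', f k := by
              rw [Finset.mul_sum]
          _ ≤ ((∑ k ∈ Sᶜ, f k) / s) * ∑ k ∈ Sᶜ, f k := by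
              refine mul_le_mul ?_ hsdle (Finset.sum_nonneg fun k _ => hf0 k)
                (by positivity)
              exact div_le_div_of_nonneg_right hS'le hspos.le |>.trans_eq rfl
          _ = (∑ k ∈ Sᶜ, f k) ^ 2 / s := by ring
      have step2 : (∑ k ∈ Sᶜ, f k) ^ 2 ≤ 9 * (∑ k ∈ S, f k) ^ 2 := by
        have h9 : (9:ℝ) * (∑ k ∈ S, f k) ^ 2 = (3 * ∑ k ∈ S, f k) ^ 2 := by ring
        rw [h9]
        exact pow_le_pow_left₀ hScnn hcone 2
      have step3 : (∑ k ∈ S, f k) ^ 2 ≤ s * ∑ k ∈ S, f k ^ 2 := by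
        have := sq_sum_le_card_mul_sum_sq (s := S) (f := f)
        simpa [hS] using this
      have hsubset : ∑ k ∈ S, f k ^ 2 ≤ ∑ k ∈ S ∪ S', f k ^ 2 :=
        Finset.sum_le_sum_of_subset_of_nonneg (Finset.subset_union_left)
          fun k _ _ => sq_nonneg _
      calc ∑ k ∈ (S ∪ S')ᶜ, f k ^ 2 = ∑ k ∈ Sᶜ \ S', f k ^ 2 := by rw [hTc]
        _ ≤ (∑ k ∈ Sᶜ, f k) ^ 2 / s := step1
        _ ≤ 9 * (∑ k ∈ S, f k) ^ 2 / s := by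
            exact div_le_div_of_nonneg_right step2 hspos.le |>.trans_eq rfl
        _ ≤ 9 * (s * ∑ k ∈ S, f k ^ 2) / s := by
            apply div_le_div_of_nonneg_right _ hspos.le
            linarith [step3]
        _ = 9 * ∑ k ∈ S, f k ^ 2 := by field_simp
        _ ≤ 9 * ∑ k ∈ S ∪ S', f k ^ 2 := by linarith [hsubset]
  have key' : ∑ k ∈ (S ∪ S')ᶜ, ∑ j, Δ k j ^ 2 ≤ 9 * ∑ k ∈ S ∪ S', ∑ j, Δ k j ^ 2 := by
    simpa [hfsq] using key
  refine ⟨key', ?_⟩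
  have hsplit : ∑ k, ∑ j, Δ k j ^ 2 =
      ∑ k ∈ S ∪ S', ∑ j, Δ k j ^ 2 + ∑ k ∈ (S ∪ S')ᶜ, ∑ j, Δ k j ^ 2 :=
    (Finset.sum_add_sum_compl _ _).symm
  linarith [key']
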